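/- For N = 2^n with n ≥ 1, the maximum of S(i,N) over 0 < i < N equals m(N) = (4N - (-1)^n - 3)/6, and the least i achieving this maximum is p(N) = (N - (-1)^n)/3. -/
import Mathlib


/-- Number of dimension-`k` links crossing intercolumn position `i`
(least nonnegative residue mod `2^k`). -/
def f (i : ℤ) (k : ℕ) : ℤ := (i * (1 - 2 * (((i - 1) / 2 ^ (k - 1)) % 2))) % 2 ^ k

/-- Total wire density at intercolumn position `i` for `N = 2^n`. -/
def S (i : ℤ) (n : ℕ) : ℤ := ∑ k ∈ Finset.Icc 1 n, f i k

/-- The `j`-th binary digit of `i`, counting from 1 at the right. -/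
def b (i : ℤ) (j : ℕ) : ℤ := (i / 2 ^ (j - 1)) % 2

/-- Excess of 1's over 0's among bit positions `j+1, ..., n` of `i`. -/
def e (i : ℤ) (j n : ℕ) : ℤ := ∑ l ∈ Finset.Icc (j + 1) n, (2 * b i l - 1)

/-- Maximum wire density `m(N)` for `N = 2^n`. -/
def m (n : ℕ) : ℤ := (4 * 2 ^ n - (-1) ^ n - 3) / 6

/-- Leftmost maximizing position `p(N)` for `N = 2^n`. -/
def p (n : ℕ) : ℤ := (2 ^ n - (-1) ^ n) / 3

/-! ### Auxiliary definitions and lemmas -/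

/-- Folded distance of `i` to the nearest multiple of `2^k`. -/
def g (i : ℤ) (k : ℕ) : ℤ := min (i % 2 ^ k) (2 ^ k - i % 2 ^ k)

lemma emod_shift (a t M : ℤ) : (a + M * t) % M = a % M := Int.add_mul_emod_self_left a M t

lemma f_eq_g (i : ℤ) (k : ℕ) (hk : 1 ≤ k) : f i k = g i k := by
  obtain ⟨K, rfl⟩ : ∃ K, k = K + 1 := ⟨k - 1, by omega⟩
  have hK : (0:ℤ) < 2 ^ K := by positivity
  have hM : (0:ℤ) < 2 ^ (K + 1) := by positivity
  have hMK : (2:ℤ) ^ (K + 1) = 2 ^ K * 2 := by rw [pow_succ]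
  set M : ℤ := 2 ^ (K + 1) with hMdef
  set r : ℤ := (i - 1) % M with hr
  set q : ℤ := (i - 1) / M with hq
  have hi : i = (r + 1) + M * q := by
    have := Int.mul_ediv_add_emod (i - 1) M
    rw [← hq, ← hr] at this; linarith
  have hr0 : 0 ≤ r := Int.emod_nonneg _ (by positivity)
  have hrM : r < M := Int.emod_lt_of_pos _ hM
  have hdiv : (i - 1) / 2 ^ K = r / 2 ^ K + q * 2 := by
    have h1 : i - 1 = r + (q * 2) * 2 ^ K := by rw [hi]; rw [hMK]; ring
    rw [h1, Int.add_mul_ediv_right _ _ (ne_of_gt hK)]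
  have hc : ((i - 1) / 2 ^ K) % 2 = r / 2 ^ K := by
    rw [hdiv, Int.add_mul_emod_self_right]
    rcases lt_or_ge r (2 ^ K) with h | h
    · rw [Int.ediv_eq_zero_of_lt hr0 h]; decide
    · have h1 : r / 2 ^ K = 1 := by
        have : r = (r - 2 ^ K) + 1 * 2 ^ K := by ring
        rw [this, Int.add_mul_ediv_right _ _ (ne_of_gt hK),
          Int.ediv_eq_zero_of_lt (by omega) (by omega)]
        norm_num
      rw [h1]; decide
  simp only [f, g, Nat.add_sub_cancel, hc, ← hMdef]
  rcases lt_or_ge r (2 ^ K) with h | h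
  · have h0 : r / 2 ^ K = 0 := Int.ediv_eq_zero_of_lt hr0 h
    have him : i % M = r + 1 := by
      rw [hi, emod_shift, Int.emod_eq_of_lt (by omega) (by omega)]
    rw [h0, him]
    have : i * (1 - 2 * 0) = (r + 1) + M * q := by rw [hi]; ring
    rw [this, emod_shift, Int.emod_eq_of_lt (by omega) (by omega)]
    omega
  · have h1 : r / 2 ^ K = 1 := by
      have : r = (r - 2 ^ K) + 1 * 2 ^ K := by ring
      rw [this, Int.add_mul_ediv_right _ _ (ne_of_gt hK),
        Int.ediv_eq_zero_of_lt (by omega) (by omega)]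
      norm_num
    have hfe : i * (1 - 2 * (r / 2 ^ K)) = (M - r - 1) + M * (-q - 1) := by
      rw [h1, hi]; ring
    rw [hfe, emod_shift, Int.emod_eq_of_lt (by omega) (by omega)]
    rcases eq_or_lt_of_le (show r + 1 ≤ M by omega) with he | hlt
    · have him : i % M = 0 := by
        rw [hi, emod_shift, ← he, Int.emod_self]
      rw [him]; omega
    · have him : i % M = r + 1 := by
        rw [hi, emod_shift, Int.emod_eq_of_lt (by omega) hlt]
      rw [him]; omega

lemma g_congr {i j : ℤ} (k : ℕ) (h : i % 2 ^ k = j % 2 ^ k) : g i k = g j k := by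
  simp only [g, h]

lemma g_neg (i : ℤ) (k : ℕ) : g (-i) k = g i k := by
  have hM : (0:ℤ) < 2 ^ k := by positivity
  set M : ℤ := 2 ^ k with hMdef
  set r : ℤ := i % M with hr
  have hr0 : 0 ≤ r := Int.emod_nonneg _ (by positivity)
  have hrM : r < M := Int.emod_lt_of_pos _ hM
  have hneg : -i = -r + M * (-(i / M)) := by
    have := Int.mul_ediv_add_emod i M
    rw [← hr] at this; linarith
  rcases eq_or_lt_of_le hr0 with he | hpos
  · have : (-i) % M = 0 := by
      rw [hneg, emod_shift, ← he]; simp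
    simp only [g, ← hMdef, ← hr, this, ← he]
  · have hnm : (-i) % M = M - r := by
      rw [hneg, show (-r + M * (-(i / M)) : ℤ) = (M - r) + M * (-(i / M) - 1) by ring,
        emod_shift, Int.emod_eq_of_lt (by omega) (by omega)]
    simp only [g, ← hMdef, ← hr, hnm]
    omega

lemma S_eq_sum_g (i : ℤ) (n : ℕ) : S i n = ∑ k ∈ Finset.Icc 1 n, g i k := by
  refine Finset.sum_congr rfl fun k hk => ?_
  exact f_eq_g i k (Finset.mem_Icc.mp hk).1

lemma S_congr {i j : ℤ} (n : ℕ) (h : i % 2 ^ n = j % 2 ^ n) : S i n = S j n := by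
  rw [S_eq_sum_g, S_eq_sum_g]
  refine Finset.sum_congr rfl fun k hk => ?_
  have hd : (2:ℤ) ^ k ∣ 2 ^ n := pow_dvd_pow 2 (Finset.mem_Icc.mp hk).2
  refine g_congr k ?_
  rw [← Int.emod_emod_of_dvd i hd, h, Int.emod_emod_of_dvd j hd]

lemma S_neg (i : ℤ) (n : ℕ) : S (-i) n = S i n := by
  rw [S_eq_sum_g, S_eq_sum_g]
  exact Finset.sum_congr rfl fun k _ => g_neg i k

lemma S_symm (i : ℤ) (n : ℕ) : S (2 ^ n - i) n = S i n := by
  rw [← S_neg i n]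
  refine S_congr n ?_
  rw [show (2:ℤ) ^ n - i = -i + 2 ^ n * 1 by ring, emod_shift]

lemma S_period (j : ℤ) (n : ℕ) : S (j + 2 ^ n) n = S j n := by
  refine S_congr n ?_
  rw [show (j : ℤ) + 2 ^ n = j + 2 ^ n * 1 by ring, emod_shift]

lemma S_zero (n : ℕ) : S 0 n = 0 := by
  unfold S f
  refine Finset.sum_eq_zero fun k _ => ?_
  norm_num

lemma S_succ (i : ℤ) (n : ℕ) : S i (n + 1) = S i n + g i (n + 1) := by
  unfold S
  rw [Finset.sum_Icc_succ_top (by omega : 1 ≤ n + 1), f_eq_g i (n + 1) (by omega)]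

lemma g_low {i : ℤ} {k : ℕ} (h0 : 0 ≤ i) (h : 2 * i ≤ 2 ^ k) : g i k = i := by
  have hM : (0:ℤ) < 2 ^ k := by positivity
  have : i % 2 ^ k = i := Int.emod_eq_of_lt h0 (by omega)
  simp only [g, this]
  omega

lemma g_high {i : ℤ} {k : ℕ} (h : 2 ^ k ≤ 2 * i) (h1 : i < 2 ^ k) : g i k = 2 ^ k - i := by
  have hM : (0:ℤ) < 2 ^ k := by positivity
  have : i % 2 ^ k = i := Int.emod_eq_of_lt (by omega) h1
  simp only [g, this]
  omega

/-! ### Arithmetic of `m` and `p` -/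

lemma p_mul (n : ℕ) : 3 * p n = 2 ^ n - (-1) ^ n := by
  have hd : ∀ n : ℕ, (3:ℤ) ∣ 2 ^ n - (-1) ^ n := by
    intro n
    induction n with
    | zero => norm_num
    | succ n ih =>
      have : (2:ℤ) ^ (n + 1) - (-1) ^ (n + 1) = 2 * (2 ^ n - (-1) ^ n) + 3 * (-1) ^ n := by
        rw [pow_succ, pow_succ]; ring
      rw [this]
      exact dvd_add (Dvd.dvd.mul_left ih 2) ⟨(-1) ^ n, rfl⟩
  exact Int.mul_ediv_cancel' (hd n)

lemma m_mul (n : ℕ) : 6 * m n = 4 * 2 ^ n - (-1) ^ n - 3 := by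
  have hd : ∀ n : ℕ, (6:ℤ) ∣ 4 * 2 ^ n - (-1) ^ n - 3 := by
    intro n
    induction n with
    | zero => norm_num
    | succ n ih =>
      have : (4:ℤ) * 2 ^ (n + 1) - (-1) ^ (n + 1) - 3
          = 2 * (4 * 2 ^ n - (-1) ^ n - 3) + 3 * ((-1) ^ n + 1) := by
        rw [pow_succ, pow_succ]; ring
      rw [this]
      refine dvd_add (Dvd.dvd.mul_left ih 2) ?_
      rcases Nat.even_or_odd n with h | h
      · rw [h.neg_one_pow]; norm_num
      · rw [h.neg_one_pow]; norm_num
  exact Int.mul_ediv_cancel' (hd n)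

lemma eps_pm (n : ℕ) : ((-1:ℤ)) ^ n = 1 ∨ ((-1:ℤ)) ^ n = -1 :=
  n.even_or_odd.imp (fun h => h.neg_one_pow) (fun h => h.neg_one_pow)

lemma p_succ (n : ℕ) : p (n + 1) = 2 ^ n - p n := by
  have h1 := p_mul n
  have h2 := p_mul (n + 1)
  have h3 : ((-1:ℤ)) ^ (n + 1) = -(-1) ^ n := by rw [pow_succ]; ring
  have h4 : ((2:ℤ)) ^ (n + 1) = 2 * 2 ^ n := by rw [pow_succ]; ring
  rw [h3, h4] at h2
  omega

lemma m_succ (n : ℕ) : m (n + 1) = m n + p (n + 1) := by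
  have h1 := m_mul n
  have h2 := m_mul (n + 1)
  have h5 := p_mul (n + 1)
  have h3 : ((-1:ℤ)) ^ (n + 1) = -(-1) ^ n := by rw [pow_succ]; ring
  have h4 : ((2:ℤ)) ^ (n + 1) = 2 * 2 ^ n := by rw [pow_succ]; ring
  rw [h3, h4] at h2 h5
  omega

lemma p_pos {n : ℕ} (hn : 1 ≤ n) : 0 < p n := by
  have h1 := p_mul n
  have h2 : (2:ℤ) ^ 1 ≤ 2 ^ n := pow_le_pow_right₀ (by norm_num) hn
  rcases eps_pm n with h | h <;> rw [h] at h1 <;> norm_num at h2 <;> omega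

lemma p_lt (n : ℕ) : p n < 2 ^ n := by
  have h1 := p_mul n
  have h2 : (0:ℤ) < 2 ^ n := by positivity
  rcases eps_pm n with h | h <;> rw [h] at h1 <;> omega

lemma m_ge (n : ℕ) : (2:ℤ) ^ n ≤ m (n + 1) := by
  have h1 := m_mul (n + 1)
  have h4 : ((2:ℤ)) ^ (n + 1) = 2 * 2 ^ n := by rw [pow_succ]; ring
  rw [h4] at h1
  rcases Nat.even_or_odd (n + 1) with h | h
  · rw [h.neg_one_pow] at h1
    have hn : 1 ≤ n := by
      rcases Nat.eq_zero_or_pos n with rfl | h'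
      · exfalso; norm_num [Nat.even_iff] at h
      · exact h'
    have h2 : (2:ℤ) ^ 1 ≤ 2 ^ n := pow_le_pow_right₀ (by norm_num) hn
    norm_num at h2
    omega
  · rw [h.neg_one_pow] at h1
    have h2 : (0:ℤ) < 2 ^ n := by positivity
    omega

/-! ### The main bounds, by joint induction -/

lemma AB (n : ℕ) :
    (∀ i : ℤ, 0 ≤ i → i < 2 ^ n → S i n ≤ m n) ∧
    (∀ i : ℤ, 0 ≤ i → i < 2 ^ n → S i n + i ≤ 2 ^ n + m n - p n) := by
  induction n with
  | zero =>
    constructor <;> intro i h0 h1 <;>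
    · have hi : i = 0 := by norm_num at h1; omega
      subst hi
      rw [S_zero]
      simp [m, p]
  | succ n ih =>
    obtain ⟨ihA, ihB⟩ := ih
    have hpow : ((2:ℤ)) ^ (n + 1) = 2 * 2 ^ n := by rw [pow_succ]; ring
    have hpos : (0:ℤ) < 2 ^ n := by positivity
    have hps : p (n + 1) = 2 ^ n - p n := p_succ n
    have hmp : m (n + 1) = m n + (2 ^ n - p n) := by
      rw [m_succ, p_succ]
    constructor
    · intro i h0 h1
      rw [S_succ]
      rcases lt_or_ge i (2 ^ n) with hc | hc
      · have hg : g i (n + 1) = i := g_low h0 (by omega)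
        have := ihB i h0 hc
        omega
      · set j : ℤ := i - 2 ^ n with hj
        have hj0 : 0 ≤ j := by omega
        have hjn : j < 2 ^ n := by omega
        have hg : g i (n + 1) = 2 ^ n - j := by
          rw [g_high (by omega) (by omega)]; omega
        have hSij : S i n = S j n := by
          rw [show i = j + 2 ^ n by omega, S_period]
        rcases eq_or_lt_of_le hj0 with he | hpos'
        · have hz : S j n = 0 := by rw [← he, S_zero]
          have := m_ge n
          omega
        · have hsym : S j n = S (2 ^ n - j) n := (S_symm j n).symm
          have := ihB (2 ^ n - j) (by omega) (by omega)
          omega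
    · intro i h0 h1
      rw [S_succ]
      rcases lt_or_ge i (2 ^ n) with hc | hc
      · have hg : g i (n + 1) = i := g_low h0 (by omega)
        have := ihA i h0 hc
        have hpn := p_lt n
        omega
      · set j : ℤ := i - 2 ^ n with hj
        have hj0 : 0 ≤ j := by omega
        have hjn : j < 2 ^ n := by omega
        have hg : g i (n + 1) = 2 ^ n - j := by
          rw [g_high (by omega) (by omega)]; omega
        have hSij : S i n = S j n := by
          rw [show i = j + 2 ^ n by omega, S_period]
        have := ihA j hj0 hjn
        omega

lemma S_p : ∀ n : ℕ, 1 ≤ n → S (p n) n = m n := by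
  intro n hn
  induction n, hn using Nat.le_induction with
  | base =>
    have hp1 : p 1 = 1 := by norm_num [p]
    have hm1 : m 1 = 1 := by norm_num [m]
    rw [hp1, hm1]
    unfold S
    rw [Finset.Icc_self, Finset.sum_singleton]
    norm_num [f]
  | succ n hn ih =>
    have hps : p (n + 1) = 2 ^ n - p n := p_succ n
    have hppos : 0 < p n := p_pos hn
    have hplt : p n < 2 ^ n := p_lt n
    have hpow : ((2:ℤ)) ^ (n + 1) = 2 * 2 ^ n := by rw [pow_succ]; ring
    rw [S_succ, g_low (by omega) (by omega), hps, S_symm, ih, m_succ, hps]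

theorem max_density_and_least_maximizer (n : ℕ) (hn : 1 ≤ n) :
    (∀ i : ℤ, 0 < i → i < 2 ^ n → S i n ≤ m n) ∧
    (0 < p n ∧ p n < 2 ^ n ∧ S (p n) n = m n) ∧
    (∀ i : ℤ, 0 < i → i < 2 ^ n → S i n = m n → p n ≤ i) := by
  obtain ⟨hA, hB⟩ := AB n
  refine ⟨fun i h0 h1 => hA i h0.le h1, ⟨p_pos hn, p_lt n, S_p n hn⟩, ?_⟩
  intro i h0 h1 hS
  obtain ⟨n, rfl⟩ : ∃ k, n = k + 1 := ⟨n - 1, by omega⟩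
  obtain ⟨hA', hB'⟩ := AB n
  have hpow : ((2:ℤ)) ^ (n + 1) = 2 * 2 ^ n := by rw [pow_succ]; ring
  have hpos : (0:ℤ) < 2 ^ n := by positivity
  rcases lt_or_ge i (2 ^ n) with hc | hc
  · have hg : g i (n + 1) = i := g_low h0.le (by omega)
    have hs : S i (n + 1) = S i n + i := by rw [S_succ, hg]
    have hle := hA' i h0.le hc
    have hmp : m (n + 1) = m n + p (n + 1) := m_succ n
    omega
  · -- p (n+1) ≤ 2^n ≤ i
    have h1' := p_mul (n + 1)
    have h3 : ((-1:ℤ)) ^ (n + 1) = -(-1) ^ n := by rw [pow_succ]; ring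
    rw [h3, hpow] at h1'
    rcases eps_pm n with h | h <;> rw [h] at h1' <;> omega
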